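/- For every finite word w over {0,1,2}, the column sums (c_0^(w), c_1^(w), c_2^(w)) = (1,1,1) M_w satisfy c_0^(w) c_1^(w) + c_1^(w) c_2^(w) + c_2^(w) c_0^(w) > 0 and c_0^(w) + c_1^(w) + c_2^(w) > 0. -/
import Mathlib


open Matrix BigOperators

/-- The matrix `M_0`. -/
noncomputable def M0 : Matrix (Fin 3) (Fin 3) ℝ :=
  (1 / 15 : ℝ) • !![9, 0, 0; 2, 2, -1; 2, -1, 2]

/-- The matrix `M_1`. -/
noncomputable def M1 : Matrix (Fin 3) (Fin 3) ℝ :=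
  (1 / 15 : ℝ) • !![2, 2, -1; 0, 9, 0; -1, 2, 2]

/-- The matrix `M_2`. -/
noncomputable def M2 : Matrix (Fin 3) (Fin 3) ℝ :=
  (1 / 15 : ℝ) • !![2, -1, 2; -1, 2, 2; 0, 0, 9]

/-- `Mmat i` is the matrix `M_i`. -/
noncomputable def Mmat : Fin 3 → Matrix (Fin 3) (Fin 3) ℝ := ![M0, M1, M2]

/-- For a word `w = [w₁, ..., wₘ]`, `Mword w = M_{w₁} * ⋯ * M_{wₘ}`
(the empty word giving the identity matrix). -/
noncomputable def Mword (w : List (Fin 3)) : Matrix (Fin 3) (Fin 3) ℝ :=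
  (w.map Mmat).prod

/-- The `j`-th column `z_j` of `M_w`, as a vector in `ℝ³`. -/
noncomputable def zcol (w : List (Fin 3)) (j : Fin 3) : Fin 3 → ℝ :=
  fun i => Mword w i j

/-- The vector `z = z₀ + z₁ + z₂`, the sum of the columns of `M_w`. -/
noncomputable def zvec (w : List (Fin 3)) : Fin 3 → ℝ :=
  fun i => ∑ j : Fin 3, Mword w i j

/-- `c_j^(w)`, the `j`-th column sum of `M_w`, i.e. the `j`-th entry of `(1,1,1) M_w`. -/
noncomputable def cw (w : List (Fin 3)) (j : Fin 3) : ℝ :=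
  ∑ i : Fin 3, Mword w i j

/-- `S^(w) = c₀^(w) + c₁^(w) + c₂^(w)`, the sum of all entries of `M_w`. -/
noncomputable def Sw (w : List (Fin 3)) : ℝ :=
  ∑ j : Fin 3, cw w j

/-- The weight `b_j^(w) = 1/6 + c_j^(w) / (2 S^(w))`. -/
noncomputable def bwt (w : List (Fin 3)) (j : Fin 3) : ℝ :=
  1 / 6 + cw w j / (2 * Sw w)


lemma cw_append (w : List (Fin 3)) (i j : Fin 3) :
    cw (w ++ [i]) j = ∑ k : Fin 3, cw w k * Mmat i k j := by
  simp only [cw, Mword, List.map_append, List.prod_append, List.map_cons, List.map_nil,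
    List.prod_cons, List.prod_nil, mul_one, Matrix.mul_apply, Finset.sum_mul]
  rw [Finset.sum_comm]

lemma step_aux (a b c : ℝ) (hQ : 0 < a*b + b*c + c*a) (hS : 0 < a + b + c) :
    0 < 3*a + b + c := by
  nlinarith [sq_nonneg (b - c), sq_nonneg (b + c), mul_pos hS hS, sq_nonneg a]

private lemma cw_app_eq (w : List (Fin 3)) (i j : Fin 3) :
    cw (w ++ [i]) j = cw w 0 * Mmat i 0 j + cw w 1 * Mmat i 1 j + cw w 2 * Mmat i 2 j := by
  rw [cw_append, Fin.sum_univ_three]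

section StepLemmas

variable (w : List (Fin 3))
  (hQ : 0 < cw w 0 * cw w 1 + cw w 1 * cw w 2 + cw w 2 * cw w 0)
  (hS : 0 < cw w 0 + cw w 1 + cw w 2)

include hQ hS

private lemma step0 :
    0 < cw (w ++ [0]) 0 * cw (w ++ [0]) 1 + cw (w ++ [0]) 1 * cw (w ++ [0]) 2 +
          cw (w ++ [0]) 2 * cw (w ++ [0]) 0 ∧
    0 < cw (w ++ [0]) 0 + cw (w ++ [0]) 1 + cw (w ++ [0]) 2 := by
  have h0 := cw_app_eq w 0 0
  have h1 := cw_app_eq w 0 1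
  have h2 := cw_app_eq w 0 2
  simp only [Mmat, M0, Matrix.smul_apply, Matrix.cons_val_zero, Matrix.cons_val_one,
    Matrix.head_cons, Matrix.cons_val_two, Matrix.tail_cons, Matrix.of_apply,
    Matrix.cons_val', Matrix.empty_val', Matrix.cons_val_fin_one, Matrix.head_fin_const,
    smul_eq_mul] at h0 h1 h2
  rw [h0, h1, h2]
  constructor
  · nlinarith [hQ]
  · nlinarith [step_aux (cw w 0) (cw w 1) (cw w 2) hQ hS]

private lemma step1 :
    0 < cw (w ++ [1]) 0 * cw (w ++ [1]) 1 + cw (w ++ [1]) 1 * cw (w ++ [1]) 2 +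
          cw (w ++ [1]) 2 * cw (w ++ [1]) 0 ∧
    0 < cw (w ++ [1]) 0 + cw (w ++ [1]) 1 + cw (w ++ [1]) 2 := by
  have h0 := cw_app_eq w 1 0
  have h1 := cw_app_eq w 1 1
  have h2 := cw_app_eq w 1 2
  simp only [Mmat, M1, Matrix.smul_apply, Matrix.cons_val_zero, Matrix.cons_val_one,
    Matrix.head_cons, Matrix.cons_val_two, Matrix.tail_cons, Matrix.of_apply,
    Matrix.cons_val', Matrix.empty_val', Matrix.cons_val_fin_one, Matrix.head_fin_const,
    smul_eq_mul] at h0 h1 h2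
  rw [h0, h1, h2]
  constructor
  · nlinarith [hQ]
  · nlinarith [step_aux (cw w 1) (cw w 2) (cw w 0) (by nlinarith [hQ]) (by linarith)]

private lemma step2 :
    0 < cw (w ++ [2]) 0 * cw (w ++ [2]) 1 + cw (w ++ [2]) 1 * cw (w ++ [2]) 2 +
          cw (w ++ [2]) 2 * cw (w ++ [2]) 0 ∧
    0 < cw (w ++ [2]) 0 + cw (w ++ [2]) 1 + cw (w ++ [2]) 2 := by
  have h0 := cw_app_eq w 2 0
  have h1 := cw_app_eq w 2 1
  have h2 := cw_app_eq w 2 2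
  simp only [Mmat, M2, Matrix.smul_apply, Matrix.cons_val_zero, Matrix.cons_val_one,
    Matrix.head_cons, Matrix.cons_val_two, Matrix.tail_cons, Matrix.of_apply,
    Matrix.cons_val', Matrix.empty_val', Matrix.cons_val_fin_one, Matrix.head_fin_const,
    smul_eq_mul] at h0 h1 h2
  rw [h0, h1, h2]
  constructor
  · nlinarith [hQ]
  · nlinarith [step_aux (cw w 2) (cw w 0) (cw w 1) (by nlinarith [hQ]) (by linarith)]

end StepLemmas

/-- For every finite word `w` over `{0,1,2}`, the column sums of `M_w` satisfy
`c₀c₁ + c₁c₂ + c₂c₀ > 0` and `c₀ + c₁ + c₂ > 0`. -/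
theorem stmt_11 (w : List (Fin 3)) :
    0 < cw w 0 * cw w 1 + cw w 1 * cw w 2 + cw w 2 * cw w 0 ∧
    0 < cw w 0 + cw w 1 + cw w 2 := by
  induction w using List.reverseRecOn with
  | nil =>
    norm_num [cw, Mword, Matrix.one_apply, Fin.sum_univ_three]
  | append_singleton w i ih =>
    obtain ⟨hQ, hS⟩ := ih
    fin_cases i
    · exact step0 w hQ hS
    · exact step1 w hQ hS
    · exact step2 w hQ hS
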